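/- If f: X^N -> {1,...,N} is a candidate argmax function and there is no edge between alpha and beta in the characteristic graph of user i, then for every other user j there is an edge between alpha and beta in the characteristic graph of user j. -/

import Mathlib

/-!
Suppose `a < b` and `f` does not separate `a` from `b` in coordinate `i`. Take the profile
`u` with `b` at `i` and `a` elsewhere, and raise coordinate `j` of `u` to `b`. Lowering
coordinate `i` back to `a` does not change `f` and leaves `j` as the unique maximum. So on `u`,
changing coordinate `j` from `a` to `b` moves `f` from `i` to `j`.
-/

/-- `f` is a candidate argmax function: `f x` is always an index attaining the
maximum coordinate of `x`. -/
def IsArgmaxFun {N L : ℕ} (f : (Fin N → Fin L) → Fin N) : Prop :=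
  ∀ x : Fin N → Fin L, ∀ j : Fin N, x j ≤ x (f x)

/-- Adjacency in the characteristic graph of user `i`: distinct values `a, b` are
adjacent iff there is an assignment of the other coordinates on which `f` differs. -/
def CharAdj {N L : ℕ} (f : (Fin N → Fin L) → Fin N) (i : Fin N) (a b : Fin L) : Prop :=
  a ≠ b ∧ ∃ y : Fin N → Fin L, f (Function.update y i a) ≠ f (Function.update y i b)

open Function

variable {N L : ℕ} {f : (Fin N → Fin L) → Fin N}

theorem CharAdj.symm {i : Fin N} {a b : Fin L} (h : CharAdj f i a b) : CharAdj f i b a :=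
  ⟨h.1.symm, h.2.imp fun _ hy => hy.symm⟩

theorem apply_update_eq_of_not_charAdj {i : Fin N} {a b : Fin L} (hab : a ≠ b)
    (h : ¬ CharAdj f i a b) (y : Fin N → Fin L) :
    f (update y i a) = f (update y i b) :=
  not_not.mp fun hy => h ⟨hab, y, hy⟩

namespace IsArgmaxFun

theorem apply_eq_of_forall_lt (hf : IsArgmaxFun f) {x : Fin N → Fin L} {k : Fin N}
    (h : ∀ m, m ≠ k → x m < x k) : f x = k :=
  not_not.mp fun hne => (hf x k).not_gt (h _ hne)

theorem apply_update_const (hf : IsArgmaxFun f) {a b : Fin L} (hab : a < b) (k : Fin N) :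
    f (update (fun _ => a) k b) = k :=
  hf.apply_eq_of_forall_lt fun m hm => by simpa [hm] using hab

theorem exists_update_ne_of_forall_update_eq (hf : IsArgmaxFun f) {i j : Fin N} (hji : j ≠ i)
    {a b : Fin L} (hab : a < b) (heq : ∀ y, f (update y i a) = f (update y i b)) :
    ∃ y, f (update y j a) ≠ f (update y j b) := by
  set u : Fin N → Fin L := update (fun _ => a) i b
  have hu_j : update u j a = u := update_eq_self_iff.mpr (update_of_ne hji b fun _ => a).symm
  have hboth_i : update (update u j b) i b = update u j b :=
    update_eq_self_iff.mpr (by simp [u, hji.symm])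
  have hlower_i : update (update u j b) i a = update (fun _ => a) j b := by
    funext m
    simp only [u, update_apply]
    split_ifs with hmi hmj <;> first | rfl | exact absurd (hmj.symm.trans hmi) hji
  have hboth : f (update u j b) = j :=
    calc f (update u j b) = f (update (update u j b) i b) := by rw [hboth_i]
      _ = f (update (update u j b) i a) := (heq _).symm
      _ = j := by rw [hlower_i, hf.apply_update_const hab]
  refine ⟨u, ?_⟩
  rw [hu_j, hf.apply_update_const hab, hboth]
  exact hji.symm

end IsArgmaxFun

theorem edge_elsewhere_general {N L : ℕ}
    (f : (Fin N → Fin L) → Fin N) (hf : IsArgmaxFun f)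
    (i : Fin N) (a b : Fin L) (hab : a ≠ b) (hno : ¬ CharAdj f i a b) :
    ∀ j : Fin N, j ≠ i → CharAdj f j a b := by
  intro j hji
  have heq := apply_update_eq_of_not_charAdj hab hno
  rcases hab.lt_or_gt with hlt | hgt
  · exact ⟨hab, hf.exists_update_ne_of_forall_update_eq hji hlt heq⟩
  · refine CharAdj.symm ⟨hab.symm, hf.exists_update_ne_of_forall_update_eq hji hgt ?_⟩
    exact fun y => (heq y).symm

/-- If `a` and `b` are not adjacent in user `i`'s characteristic graph, then they are
adjacent in every other user's characteristic graph. -/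
theorem edge_elsewhere {N L : ℕ} (hN : 2 ≤ N)
    (f : (Fin N → Fin L) → Fin N) (hf : IsArgmaxFun f)
    (i : Fin N) (a b : Fin L) (hab : a ≠ b) (hno : ¬ CharAdj f i a b) :
    ∀ j : Fin N, j ≠ i → CharAdj f j a b :=
  edge_elsewhere_general f hf i a b hab hno
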